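/- arXiv:1202.6459 — 2 statements merged into one kernel-verified Lean document; each statement's English description precedes it below -/
import Mathlib

section
/- Let R be a commutative ring, r : R → R a ring homomorphism, σ = id − r, and S ⊆ R a subring with r(S) ⊆ S. Suppose x ∈ R satisfies σ(x) ∈ S. Then for every i ≥ 1, σ(x^i) lies in the S-submodule of R generated by 1, x, x², …, x^{i−1}. -/
/- Writing `r x = x - s` with `s := σ(x) ∈ S`, the binomial theorem expands `r (x ^ i) = (x - s) ^ i`
as `x ^ i` plus an `S`-linear combination of `1, x, …, x ^ (i - 1)`. -/

open Finset

lemma pow_sub_sub_pow_mem_span {R : Type*} [CommRing R] {S : Subring R} {s : R} (hs : s ∈ S)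
    (x : R) (i : ℕ) :
    x ^ i - (x - s) ^ i ∈ Submodule.span S ((fun j => x ^ j) '' {j : ℕ | j < i}) := by
  have expand : (x - s) ^ i =
      x ^ i + ∑ j ∈ range i, ((-s) ^ (i - j) * (i.choose j : R)) * x ^ j := by
    rw [sub_eq_add_neg, add_pow, sum_range_succ]
    simp only [Nat.sub_self, pow_zero, Nat.choose_self, Nat.cast_one, mul_one]
    rw [add_comm]
    congr 1
    exact sum_congr rfl fun j _ => by ring
  rw [expand, sub_add_cancel_left]
  refine neg_mem (sum_mem fun j hj => ?_)
  have hc : (-s) ^ (i - j) * (i.choose j : R) ∈ S :=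
    mul_mem (pow_mem (neg_mem hs) _) (natCast_mem S _)
  exact Submodule.smul_of_tower_mem _ (⟨_, hc⟩ : S)
    (Submodule.subset_span ⟨j, mem_range.mp hj, rfl⟩)

theorem sigma_pow_mem_span_general {R : Type*} [CommRing R] (r : R →+* R)
    (S : Subring R) (x : R) (hx : x - r x ∈ S)
    (i : ℕ) :
    x ^ i - r (x ^ i) ∈
      Submodule.span S ((fun j => x ^ j) '' {j : ℕ | j < i}) := by
  simpa only [map_pow, sub_sub_cancel] using pow_sub_sub_pow_mem_span hx x i

/-- If `σ = id − r` sends `x` into a subring `S` stable under `r`, then `σ(x^i)` lies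
in the `S`-submodule generated by `1, x, …, x^{i−1}` for every `i ≥ 1`. -/
theorem sigma_pow_mem_span {R : Type*} [CommRing R] (r : R →+* R)
    (S : Subring R) (hS : ∀ s ∈ S, r s ∈ S) (x : R) (hx : x - r x ∈ S)
    (i : ℕ) (hi : 1 ≤ i) :
    x ^ i - r (x ^ i) ∈
      Submodule.span S ((fun j => x ^ j) '' {j : ℕ | j < i}) :=
  sigma_pow_mem_span_general r S x hx i
end

section
/- Let p be a prime, K a field of characteristic p, and V ⊆ K a finite-dimensional 𝔽_p-subspace of K (viewed as an 𝔽_p-vector space). Then the polynomial φ(X) = ∏_{v ∈ V} (X − v) ∈ K[X] is additive: φ(X + Y) = φ(X) + φ(Y) as polynomials in K[X, Y]. Equivalently, φ(a + b) = φ(a) + φ(b) for all a, b in any commutative K-algebra. -/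
/-!
If `v ∈ V` then `φ(X + v) = φ(X)` and `φ(v) = 0`, so `ψ(Y) = φ(X + Y) - φ(Y) - φ(X)`, a polynomial in
`Y` over the domain `K[X]`, vanishes at the `|V|` points of `V`. As `φ` is monic of degree `|V|`,
the top terms of `φ(X + Y)` and `φ(Y)` cancel, so `ψ` has degree `< |V|` and is zero. Specialising
`X` and `Y` then gives additivity in every commutative `K`-algebra.
-/

open Polynomial

namespace Polynomial

variable {R : Type*} [CommRing R]

/-- In `R[X][X]` the outer variable `X` plays the role of `X` and `C X` that of `Y`, so this says
`φ(X + Y) = φ(X) + φ(Y)`. -/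
def IsAdditive (φ : R[X]) : Prop :=
  (φ.map C).comp (X + C X) = φ.map C + C φ

theorem IsAdditive.aeval_add {φ : R[X]} (hφ : φ.IsAdditive) {A : Type*} [CommRing A] [Algebra R A]
    (a b : A) : aeval (a + b) φ = aeval a φ + aeval b φ := by
  have hC : ((aeval b : R[X] →ₐ[R] A) : R[X] →+* A).comp C = algebraMap R A :=
    (aeval b).comp_algebraMap
  simpa [eval₂_comp, eval₂_map, hC, aeval_def] using congrArg (eval₂ (aeval b).toRingHom a) hφ

theorem isAdditive_of_forall_comp_X_add_C_eq [IsDomain R] {φ : R[X]} {s : Finset R}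
    (hs : s.Nonempty) (hφ : IsMonicOfDegree φ s.card) (hinv : ∀ v ∈ s, φ.comp (X + C v) = φ)
    (hroot : ∀ v ∈ s, φ.eval v = 0) : φ.IsAdditive := by
  have hΦ : IsMonicOfDegree (φ.map C) s.card :=
    ⟨(hφ.monic.natDegree_map C).trans hφ.natDegree_eq, hφ.monic.map C⟩
  have hΦ' : IsMonicOfDegree ((φ.map C).comp (X + C X)) s.card := by
    simpa using hΦ.comp one_ne_zero (isMonicOfDegree_X_add_one X)
  rw [IsAdditive, ← sub_eq_iff_eq_add']
  refine eq_of_natDegree_lt_card_of_eval_eq' _ _ (s.map ⟨C, C_injective⟩) ?_ ?_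
  · simp only [Finset.mem_map, Function.Embedding.coeFn_mk, forall_exists_index, and_imp]
    rintro _ v hv rfl
    have eval_map_C_eq_comp (q : R[X]) : (φ.map C).eval q = φ.comp q := eval_map C q
    rw [eval_sub, eval_comp, eval_map_C_eq_comp, eval_map_C_eq_comp, comp_C, hroot v hv, C_0,
      sub_zero, eval_add, eval_X, eval_C, eval_C, add_comm]
    exact hinv v hv
  · rw [natDegree_C, max_eq_left (Nat.zero_le _), Finset.card_map]
    exact hΦ'.natDegree_sub_lt hs.card_pos.ne' hΦ

theorem isMonicOfDegree_prod_X_sub_C [Nontrivial R] (s : Finset R) :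
    IsMonicOfDegree (∏ w ∈ s, (X - C w)) s.card :=
  ⟨by simp [natDegree_prod_of_monic s _ fun w _ ↦ monic_X_sub_C w],
    monic_prod_of_monic _ _ fun w _ ↦ monic_X_sub_C w⟩

theorem prod_X_sub_C_comp_X_add_C {G : AddSubgroup R} (hG : (G : Set R).Finite) {v : R}
    (hv : v ∈ G) :
    (∏ w ∈ hG.toFinset, (X - C w)).comp (X + C v) = ∏ w ∈ hG.toFinset, (X - C w) := by
  rw [prod_comp]
  refine Finset.prod_nbij' (· - v) (· + v) ?_ ?_ (fun _ _ ↦ sub_add_cancel _ _)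
    (fun _ _ ↦ add_sub_cancel_right _ _) fun w _ ↦ ?_
  · simpa using fun w hw ↦ G.sub_mem hw hv
  · simpa using fun w hw ↦ G.add_mem hw hv
  · simp only [sub_comp, X_comp, C_comp, C_sub]
    ring

theorem isAdditive_prod_X_sub_C [IsDomain R] {G : AddSubgroup R} (hG : (G : Set R).Finite) :
    (∏ w ∈ hG.toFinset, (X - C w)).IsAdditive :=
  isAdditive_of_forall_comp_X_add_C_eq ⟨0, by simp⟩ (isMonicOfDegree_prod_X_sub_C _)
    (fun v hv ↦ prod_X_sub_C_comp_X_add_C hG (by simpa using hv))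
    (fun v hv ↦ by rw [eval_prod]; exact Finset.prod_eq_zero hv (by simp))

end Polynomial

theorem prod_sub_additive_general {p : ℕ} {K : Type*} [Field K]
    [Algebra (ZMod p) K] (V : Submodule (ZMod p) K) (hV : (V : Set K).Finite)
    (A : Type*) [CommRing A] [Algebra K A] (a b : A) :
    Polynomial.aeval (a + b) (∏ v ∈ hV.toFinset, (X - C v)) =
      Polynomial.aeval a (∏ v ∈ hV.toFinset, (X - C v)) +
        Polynomial.aeval b (∏ v ∈ hV.toFinset, (X - C v)) :=
  (isAdditive_prod_X_sub_C (G := V.toAddSubgroup) hV).aeval_add a b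

/-- If `V` is a finite `𝔽_p`-subspace of a field `K` of characteristic `p`, then
`φ(X) = ∏_{v ∈ V} (X − v)` is additive: `φ(a + b) = φ(a) + φ(b)` in any commutative
`K`-algebra. -/
theorem prod_sub_additive {p : ℕ} [Fact p.Prime] {K : Type*} [Field K] [CharP K p]
    [Algebra (ZMod p) K] (V : Submodule (ZMod p) K) (hV : (V : Set K).Finite)
    (A : Type*) [CommRing A] [Algebra K A] (a b : A) :
    Polynomial.aeval (a + b) (∏ v ∈ hV.toFinset, (X - C v)) =
      Polynomial.aeval a (∏ v ∈ hV.toFinset, (X - C v)) +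
        Polynomial.aeval b (∏ v ∈ hV.toFinset, (X - C v)) :=
  prod_sub_additive_general V hV A a b
end
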